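/- arXiv:2304.07157 — 3 statements merged into one kernel-verified Lean document; each statement's English description precedes it below -/
import Mathlib

section
/- If L is a switched combination of two orthogonal latin squares A₀ and A₁ of order n, then any K_{3,3} pattern in L occupies six distinct 2×2 blocks; i.e., no two of its six cells lie in the same block. -/
/-- A latin square of order `n` as a function: each row and each column is injective. -/
def IsLatin {n : ℕ} (A : Fin n → Fin n → Fin n) : Prop :=
  (∀ r, Function.Injective (A r)) ∧ (∀ c, Function.Injective (fun r => A r c))

/-- The block coordinate of a row or column index. -/
def blk {n : ℕ} (i : Fin (2 * n)) : Fin n :=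
  ⟨i.val / 2, by have := i.isLt; omega⟩

/-- The switched combination of two latin squares `A₀`, `A₁` of order `n` with switching
matrix `S`: letters of `A₀` are embedded as even numbers and letters of `A₁` as odd numbers,
and `L(i,j) = A_ε(⌊i/2⌋,⌊j/2⌋)` where `ε = 1` iff `i + j + S(⌊i/2⌋,⌊j/2⌋) ≡ 0 (mod 2)`. -/
def comb {n : ℕ} (A0 A1 : Fin n → Fin n → Fin n) (S : Fin n → Fin n → ZMod 2)
    (i j : Fin (2 * n)) : ℕ :=
  if ((i.val : ZMod 2) + (j.val : ZMod 2) + S (blk i) (blk j) = 0)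
    then 2 * (A1 (blk i) (blk j)).val + 1
    else 2 * (A0 (blk i) (blk j)).val


/-!
Two distinct indices in the same block have opposite parity, so inside a block the switching
sends the two cells of a row (or of a column) to different squares: they carry exactly the letters
`2·A₀(b)` and `2·A₁(b)+1` of the block `b`. If rows `r₁, r₂` of a `K_{3,3}` pattern shared a block,
the latin property would force columns `c₁, c₂` to share one as well; the two remaining letter
equalities then say that the blocks `(⌊r₂/2⌋, ⌊c₃/2⌋)` and `(⌊r₃/2⌋, ⌊c₂/2⌋)` carry the same pair of
letters, which by orthogonality makes them the same block, so three distinct rows would lie in one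
block. By cyclic symmetry all row blocks, and hence all column blocks, of the pattern are distinct.
-/

section Blocks

variable {n : ℕ}

lemma blk_ne_of_blk_eq {i j k : Fin (2 * n)} (hij : i ≠ j) (hik : i ≠ k) (hjk : j ≠ k)
    (h : blk i = blk j) : blk i ≠ blk k := by
  intro h'
  have := congrArg Fin.val h
  have := congrArg Fin.val h'
  simp only [blk] at *
  omega

lemma natCast_ne_of_blk_eq {i j : Fin (2 * n)} (h : blk i = blk j) (hne : i ≠ j) :
    (i.val : ZMod 2) ≠ j.val := by
  have := congrArg Fin.val h
  simp only [blk] at this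
  rw [Ne, ZMod.natCast_eq_natCast_iff']
  omega

end Blocks

section Letters

variable {n : ℕ} (A0 A1 : Fin n → Fin n → Fin n)

def blockLetters (p q : Fin n) : Finset ℕ :=
  {2 * (A0 p q).val, 2 * (A1 p q).val + 1}

lemma eq_of_pair_even_odd_eq {a b c d : ℕ}
    (h : ({2 * a, 2 * b + 1} : Finset ℕ) = {2 * c, 2 * d + 1}) : a = c ∧ b = d := by
  have ha : 2 * a ∈ ({2 * c, 2 * d + 1} : Finset ℕ) := h ▸ Finset.mem_insert_self _ _
  have hb : 2 * b + 1 ∈ ({2 * c, 2 * d + 1} : Finset ℕ) := h ▸ by simp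
  simp only [Finset.mem_insert, Finset.mem_singleton] at ha hb
  omega

lemma blockLetters_injective
    (horth : Function.Injective (fun p : Fin n × Fin n => (A0 p.1 p.2, A1 p.1 p.2))) :
    Function.Injective (fun p : Fin n × Fin n => blockLetters A0 A1 p.1 p.2) := by
  intro p p' h
  obtain ⟨h0, h1⟩ := eq_of_pair_even_odd_eq h
  exact horth (Prod.ext (Fin.ext h0) (Fin.ext h1))

variable (S : Fin n → Fin n → ZMod 2)

lemma comb_pair_eq_blockLetters {i i' j j' : Fin (2 * n)} (hi : blk i = blk i')
    (hj : blk j = blk j') (hpar : (i.val : ZMod 2) + j.val ≠ i'.val + j'.val) :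
    ({comb A0 A1 S i j, comb A0 A1 S i' j'} : Finset ℕ) = blockLetters A0 A1 (blk i) (blk j) := by
  have hswitch : ∀ x y s : ZMod 2, x ≠ y → (x + s = 0 ↔ ¬y + s = 0) := by decide
  have hsw := hswitch _ _ (S (blk i) (blk j)) hpar
  unfold comb blockLetters
  rw [← hi, ← hj]
  split_ifs with h h' h'
  · exact absurd h' (hsw.mp h)
  · exact Finset.pair_comm _ _
  · rfl
  · exact absurd h' (mt hsw.mpr h)

lemma eq_or_eq_of_comb_eq {i i' j j' : Fin (2 * n)}
    (h : comb A0 A1 S i j = comb A0 A1 S i' j') :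
    A0 (blk i) (blk j) = A0 (blk i') (blk j') ∨ A1 (blk i) (blk j) = A1 (blk i') (blk j') := by
  unfold comb at h
  split_ifs at h
  · exact Or.inr (Fin.ext (by omega))
  · omega
  · omega
  · exact Or.inl (Fin.ext (by omega))

variable {A0 A1}

lemma blk_eq_right_of_comb_eq (hA0 : IsLatin A0) (hA1 : IsLatin A1) {i i' j j' : Fin (2 * n)}
    (h : comb A0 A1 S i j = comb A0 A1 S i' j') (hi : blk i = blk i') : blk j = blk j' := by
  have h := eq_or_eq_of_comb_eq A0 A1 S h
  rw [← hi] at h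
  exact h.elim (fun h => hA0.1 _ h) (fun h => hA1.1 _ h)

lemma blk_eq_left_of_comb_eq (hA0 : IsLatin A0) (hA1 : IsLatin A1) {i i' j j' : Fin (2 * n)}
    (h : comb A0 A1 S i j = comb A0 A1 S i' j') (hj : blk j = blk j') : blk i = blk i' := by
  have h := eq_or_eq_of_comb_eq A0 A1 S h
  rw [← hj] at h
  exact h.elim (fun h => hA0.2 _ h) (fun h => hA1.2 _ h)

end Letters

def IsK33Pattern {α β : Type*} (L : α → α → β) (r1 r2 r3 c1 c2 c3 : α) : Prop :=
  (r1 ≠ r2 ∧ r1 ≠ r3 ∧ r2 ≠ r3) ∧ (c1 ≠ c2 ∧ c1 ≠ c3 ∧ c2 ≠ c3) ∧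
    L r1 c2 = L r2 c1 ∧ L r2 c3 = L r3 c2 ∧ L r3 c1 = L r1 c3

namespace IsK33Pattern

variable {α β : Type*} {L : α → α → β} {r1 r2 r3 c1 c2 c3 : α}

lemma rotate (h : IsK33Pattern L r1 r2 r3 c1 c2 c3) : IsK33Pattern L r2 r3 r1 c2 c3 c1 := by
  obtain ⟨⟨hr12, hr13, hr23⟩, ⟨hc12, hc13, hc23⟩, h1, h2, h3⟩ := h
  exact ⟨⟨hr23, hr12.symm, hr13.symm⟩, ⟨hc23, hc12.symm, hc13.symm⟩, h2, h3, h1⟩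

variable {n : ℕ} {A0 A1 : Fin n → Fin n → Fin n} {S : Fin n → Fin n → ZMod 2}
  {r1 r2 r3 c1 c2 c3 : Fin (2 * n)}

lemma blk_ne_of_comb (hA0 : IsLatin A0) (hA1 : IsLatin A1)
    (horth : Function.Injective (fun p : Fin n × Fin n => (A0 p.1 p.2, A1 p.1 p.2)))
    (h : IsK33Pattern (comb A0 A1 S) r1 r2 r3 c1 c2 c3) :
    blk r1 ≠ blk r2 ∧ blk c1 ≠ blk c2 := by
  obtain ⟨⟨hr12, hr13, hr23⟩, ⟨hc12, -, -⟩, h1, h2, h3⟩ := h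
  have hrow : blk r1 ≠ blk r2 := by
    intro hρ
    have hγ : blk c2 = blk c1 := blk_eq_right_of_comb_eq S hA0 hA1 h1 hρ
    have hpair₁ : ({comb A0 A1 S r2 c3, comb A0 A1 S r1 c3} : Finset ℕ) =
        blockLetters A0 A1 (blk r2) (blk c3) :=
      comb_pair_eq_blockLetters A0 A1 S hρ.symm rfl
        (fun e => natCast_ne_of_blk_eq hρ hr12 (add_right_cancel e).symm)
    have hpair₂ : ({comb A0 A1 S r3 c2, comb A0 A1 S r3 c1} : Finset ℕ) =
        blockLetters A0 A1 (blk r3) (blk c2) :=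
      comb_pair_eq_blockLetters A0 A1 S rfl hγ
        (fun e => natCast_ne_of_blk_eq hγ.symm hc12 (add_left_cancel e).symm)
    rw [← h2, h3, hpair₁] at hpair₂
    have hρ' : blk r2 = blk r3 := congrArg Prod.fst <|
      blockLetters_injective A0 A1 horth (a₁ := (blk r2, blk c3)) (a₂ := (blk r3, blk c2)) hpair₂
    exact blk_ne_of_blk_eq hr12 hr13 hr23 hρ (hρ.trans hρ')
  exact ⟨hrow, fun hγ => hrow (blk_eq_left_of_comb_eq S hA0 hA1 h1 hγ.symm)⟩

end IsK33Pattern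

/-- In a switched combination of two *orthogonal* latin squares, any `K_{3,3}` pattern
occupies six distinct blocks. -/
theorem stmt9 {n : ℕ} (A0 A1 : Fin n → Fin n → Fin n)
    (hA0 : IsLatin A0) (hA1 : IsLatin A1)
    (horth : Function.Injective (fun p : Fin n × Fin n => (A0 p.1 p.2, A1 p.1 p.2)))
    (S : Fin n → Fin n → ZMod 2)
    (r1 r2 r3 c1 c2 c3 : Fin (2 * n))
    (hr : r1 ≠ r2 ∧ r1 ≠ r3 ∧ r2 ≠ r3) (hc : c1 ≠ c2 ∧ c1 ≠ c3 ∧ c2 ≠ c3)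
    (h1 : comb A0 A1 S r1 c2 = comb A0 A1 S r2 c1)
    (h2 : comb A0 A1 S r2 c3 = comb A0 A1 S r3 c2)
    (h3 : comb A0 A1 S r3 c1 = comb A0 A1 S r1 c3) :
    ([(blk r1, blk c2), (blk r2, blk c3), (blk r3, blk c1),
      (blk r2, blk c1), (blk r3, blk c2), (blk r1, blk c3)] :
      List (Fin n × Fin n)).Nodup := by
  have h : IsK33Pattern (comb A0 A1 S) r1 r2 r3 c1 c2 c3 := ⟨hr, hc, h1, h2, h3⟩
  obtain ⟨hρ12, hγ12⟩ := h.blk_ne_of_comb hA0 hA1 horth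
  obtain ⟨hρ23, hγ23⟩ := h.rotate.blk_ne_of_comb hA0 hA1 horth
  obtain ⟨hρ31, hγ31⟩ := h.rotate.rotate.blk_ne_of_comb hA0 hA1 horth
  simp [Prod.ext_iff, hρ12, hγ12, hρ23, hγ23, hρ31, hγ31, hρ12.symm, hγ12.symm, hρ23.symm,
    hγ23.symm, hρ31.symm, hγ31.symm]
end

section
/- If A₀ and A₁ are non-orthogonal latin squares of order n, then every switched combination L of A₀ and A₁ contains a K_{3,3} pattern located in just 3 blocks. -/
/-
Suppose the blocks `(r, c)` and `(r', c')` carry the same pair of letters; as `A₀` is latin,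
`r ≠ r'` and `c ≠ c'`. Inside a block the letter of `L` depends only on the parity of the position,
shifted by the switching bit of the block. Take rows `2r, 2r+1, 2r'+s` with `s = S(r,c) + S(r',c')`
and columns `2c', 2c'+1, 2c`: the first letter equality of the pattern lies inside block `(r, c')`,
and the other two compare block `(r, c)` with block `(r', c')`, where the offset `s` compensates
the difference of their switching bits.
-/

theorem IsLatin.ne_and_ne_of_apply_eq {n : ℕ} {A : Fin n → Fin n → Fin n} (hA : IsLatin A)
    {r r' c c' : Fin n} (h : A r c = A r' c') (hne : (r, c) ≠ (r', c')) : r ≠ r' ∧ c ≠ c' := by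
  constructor
  · rintro rfl
    exact hne (by rw [hA.1 r h])
  · rintro rfl
    exact hne (by rw [hA.2 c h])

section indexInBlock

variable {n : ℕ}

def indexInBlock (b : Fin n) (e : ZMod 2) : Fin (2 * n) :=
  ⟨2 * b.val + e.val, by have := ZMod.val_lt e; omega⟩

@[simp]
theorem blk_indexInBlock (b : Fin n) (e : ZMod 2) : blk (indexInBlock b e) = b := by
  have := ZMod.val_lt e
  ext
  simp only [blk, indexInBlock]
  omega

@[simp]
theorem natCast_indexInBlock (b : Fin n) (e : ZMod 2) :
    ((indexInBlock b e).val : ZMod 2) = e := by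
  simp [indexInBlock, show (2 : ZMod 2) = 0 from rfl]

theorem indexInBlock_inj {b b' : Fin n} {e e' : ZMod 2} :
    indexInBlock b e = indexInBlock b' e' ↔ b = b' ∧ e = e' := by
  refine ⟨fun h => ⟨?_, ?_⟩, fun ⟨hb, he⟩ => hb ▸ he ▸ rfl⟩
  · simpa using congrArg blk h
  · simpa using congrArg (fun i : Fin (2 * n) => (i.val : ZMod 2)) h

theorem comb_indexInBlock (A0 A1 : Fin n → Fin n → Fin n) (S : Fin n → Fin n → ZMod 2)
    (r c : Fin n) (e f : ZMod 2) :
    comb A0 A1 S (indexInBlock r e) (indexInBlock c f) =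
      if e + f + S r c = 0 then 2 * (A1 r c).val + 1 else 2 * (A0 r c).val := by
  simp [comb]

theorem comb_indexInBlock_eq {A0 A1 : Fin n → Fin n → Fin n} {S : Fin n → Fin n → ZMod 2}
    {r c r' c' : Fin n} (h0 : A0 r c = A0 r' c') (h1 : A1 r c = A1 r' c')
    {e f e' f' : ZMod 2} (hpar : e + f + S r c = e' + f' + S r' c') :
    comb A0 A1 S (indexInBlock r e) (indexInBlock c f) =
      comb A0 A1 S (indexInBlock r' e') (indexInBlock c' f') := by
  rw [comb_indexInBlock, comb_indexInBlock, h0, h1, hpar]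

end indexInBlock

theorem stmt10_general {n : ℕ} (A0 A1 : Fin n → Fin n → Fin n)
    (hA0 : IsLatin A0)
    (hnotorth : ¬ Function.Injective (fun p : Fin n × Fin n => (A0 p.1 p.2, A1 p.1 p.2)))
    (S : Fin n → Fin n → ZMod 2) :
    ∃ r1 r2 r3 c1 c2 c3 : Fin (2 * n),
      r1 ≠ r2 ∧ r1 ≠ r3 ∧ r2 ≠ r3 ∧ c1 ≠ c2 ∧ c1 ≠ c3 ∧ c2 ≠ c3 ∧
      comb A0 A1 S r1 c2 = comb A0 A1 S r2 c1 ∧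
      comb A0 A1 S r2 c3 = comb A0 A1 S r3 c2 ∧
      comb A0 A1 S r3 c1 = comb A0 A1 S r1 c3 ∧
      ([(blk r1, blk c2), (blk r2, blk c3), (blk r3, blk c1),
        (blk r2, blk c1), (blk r3, blk c2), (blk r1, blk c3)] :
        List (Fin n × Fin n)).toFinset.card = 3 := by
  obtain ⟨⟨r, c⟩, ⟨r', c'⟩, heq, hne⟩ := Function.not_injective_iff.mp hnotorth
  obtain ⟨h0, h1⟩ := Prod.mk.inj heq
  obtain ⟨hr, hc⟩ := hA0.ne_and_ne_of_apply_eq h0 hne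
  refine ⟨indexInBlock r 0, indexInBlock r 1, indexInBlock r' (S r c + S r' c'),
    indexInBlock c' 0, indexInBlock c' 1, indexInBlock c 0, ?_, ?_, ?_, ?_, ?_, ?_,
    comb_indexInBlock_eq rfl rfl (by ring), comb_indexInBlock_eq h0 h1 (by grind),
    comb_indexInBlock_eq h0.symm h1.symm (by grind), ?_⟩
  all_goals simp [indexInBlock_inj, hr, hc, hc.symm]

/-- A switched combination of two *non-orthogonal* latin squares always contains a
`K_{3,3}` pattern located in just 3 blocks. -/
theorem stmt10 {n : ℕ} (A0 A1 : Fin n → Fin n → Fin n)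
    (hA0 : IsLatin A0) (hA1 : IsLatin A1)
    (hnotorth : ¬ Function.Injective (fun p : Fin n × Fin n => (A0 p.1 p.2, A1 p.1 p.2)))
    (S : Fin n → Fin n → ZMod 2) :
    ∃ r1 r2 r3 c1 c2 c3 : Fin (2 * n),
      r1 ≠ r2 ∧ r1 ≠ r3 ∧ r2 ≠ r3 ∧ c1 ≠ c2 ∧ c1 ≠ c3 ∧ c2 ≠ c3 ∧
      comb A0 A1 S r1 c2 = comb A0 A1 S r2 c1 ∧
      comb A0 A1 S r2 c3 = comb A0 A1 S r3 c2 ∧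
      comb A0 A1 S r3 c1 = comb A0 A1 S r1 c3 ∧
      ([(blk r1, blk c2), (blk r2, blk c3), (blk r3, blk c1),
        (blk r2, blk c1), (blk r3, blk c2), (blk r1, blk c3)] :
        List (Fin n × Fin n)).toFinset.card = 3 :=
  stmt10_general A0 A1 hA0 hnotorth S
end

section
/- If a switched combination of two latin squares contains a K_{3,3} pattern located in six distinct blocks, then the switching matrix has an even number of ones in the six positions corresponding to those blocks; moreover, for any other switching matrix with an even number of ones in those six positions, the resulting switched combination of the same two squares has a K_{3,3} pattern in the corresponding six blocks. -/
/-
Equal letters of `L_S` come from the same square, and which square a cell `(i, j)` uses is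
governed by the parity `i + j + S(⌊i/2⌋, ⌊j/2⌋)`. Summing the three parity equations of a
`K_{3,3}` pattern, the row and column parities cancel and only the six entries of `S` remain.
Conversely, the six blocks form a hexagon in the bipartite graph of row and column blocks, so a
difference `S - S'` with even sum over them is of the form `d I + e J`; moving each row and
column of the pattern to the other index of its block when `d` resp. `e` is `1` turns the
pattern of `L_S` into one of `L_S'` with the same letters.
-/

def cellParity {n : ℕ} (S : Fin n → Fin n → ZMod 2) (i j : Fin (2 * n)) : ZMod 2 :=
  (i.val : ZMod 2) + (j.val : ZMod 2) + S (blk i) (blk j)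

lemma cellParity_eq_of_comb_eq {n : ℕ} {A0 A1 : Fin n → Fin n → Fin n}
    {S : Fin n → Fin n → ZMod 2} {i j i' j' : Fin (2 * n)}
    (h : comb A0 A1 S i j = comb A0 A1 S i' j') :
    cellParity S i j = cellParity S i' j' := by
  unfold comb at h
  unfold cellParity
  split_ifs at h with hij hij' hij'
  · rw [hij, hij']
  · omega
  · omega
  · exact (Fin.eq_one_of_ne_zero _ hij).trans (Fin.eq_one_of_ne_zero _ hij').symm

lemma comb_eq_of_cellParity_eq {n : ℕ} (A0 A1 : Fin n → Fin n → Fin n)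
    {S S' : Fin n → Fin n → ZMod 2} {i j i' j' : Fin (2 * n)}
    (hi : blk i' = blk i) (hj : blk j' = blk j) (h : cellParity S' i' j' = cellParity S i j) :
    comb A0 A1 S' i' j' = comb A0 A1 S i j := by
  unfold comb
  unfold cellParity at h
  rw [h, hi, hj]

lemma sum_eq_sum_of_hexagon {R : Type*} [CommRing R]
    {x1 x2 x3 y1 y2 y3 s12 s23 s31 s21 s32 s13 : R}
    (h12 : x1 + y2 + s12 = x2 + y1 + s21) (h23 : x2 + y3 + s23 = x3 + y2 + s32)
    (h31 : x3 + y1 + s31 = x1 + y3 + s13) :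
    s12 + s23 + s31 = s21 + s32 + s13 := by
  linear_combination h12 + h23 + h31

lemma exists_hexagon_potential {G : Type*} [AddCommGroup G] {a12 a23 a31 a21 a32 a13 : G}
    (h : a12 + a23 + a31 = a21 + a32 + a13) :
    ∃ d1 d2 d3 e1 e2 e3 : G, d1 + e2 = a12 ∧ d2 + e3 = a23 ∧ d3 + e1 = a31 ∧
      d2 + e1 = a21 ∧ d3 + e2 = a32 ∧ d1 + e3 = a13 := by
  refine ⟨0, a21 - a31 + a32 - a12, a32 - a12, a31 - a32 + a12, a12,
    a23 - a21 + a31 - a32 + a12, by abel, by abel, by abel, by abel, by abel, ?_⟩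
  calc 0 + (a23 - a21 + a31 - a32 + a12) = a12 + a23 + a31 - a21 - a32 := by abel
    _ = a13 := by rw [h]; abel

lemma add_six_eq_zero_iff {R : Type*} [Ring R] [CharP R 2] (a b c d e f : R) :
    a + b + c + d + e + f = 0 ↔ a + b + c = d + e + f := by
  rw [← CharTwo.add_eq_zero (a := a + b + c), ← add_assoc, ← add_assoc]

def blockIndex {n : ℕ} (b : Fin n) (p : ZMod 2) : Fin (2 * n) :=
  ⟨2 * b.val + p.val, by have := b.isLt; have := ZMod.val_lt p; omega⟩

@[simp]
lemma blk_blockIndex {n : ℕ} (b : Fin n) (p : ZMod 2) : blk (blockIndex b p) = b := by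
  have := ZMod.val_lt p
  ext
  simp only [blk, blockIndex]
  omega

@[simp]
lemma cast_blockIndex {n : ℕ} (b : Fin n) (p : ZMod 2) :
    ((blockIndex b p).val : ZMod 2) = p := by
  simp only [blockIndex, Nat.cast_add, Nat.cast_mul, ZMod.natCast_self, zero_mul, zero_add,
    ZMod.natCast_val, ZMod.cast_id', id]

def shiftInBlock {n : ℕ} (i : Fin (2 * n)) (d : ZMod 2) : Fin (2 * n) :=
  blockIndex (blk i) ((i.val : ZMod 2) + d)

@[simp]
lemma blk_shiftInBlock {n : ℕ} (i : Fin (2 * n)) (d : ZMod 2) : blk (shiftInBlock i d) = blk i :=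
  blk_blockIndex _ _

lemma shiftInBlock_ne {n : ℕ} {i i' : Fin (2 * n)} (h : blk i ≠ blk i') (d d' : ZMod 2) :
    shiftInBlock i d ≠ shiftInBlock i' d' :=
  fun heq => h (by simpa using congrArg blk heq)

lemma comb_shiftInBlock {n : ℕ} (A0 A1 : Fin n → Fin n → Fin n)
    {S S' : Fin n → Fin n → ZMod 2} {i j : Fin (2 * n)} {d e : ZMod 2}
    (h : d + e = S (blk i) (blk j) - S' (blk i) (blk j)) :
    comb A0 A1 S' (shiftInBlock i d) (shiftInBlock j e) = comb A0 A1 S i j := by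
  refine comb_eq_of_cellParity_eq A0 A1 (blk_shiftInBlock i d) (blk_shiftInBlock j e) ?_
  simp only [cellParity, shiftInBlock, cast_blockIndex, blk_blockIndex]
  linear_combination h

theorem stmt11_general {n : ℕ} (A0 A1 : Fin n → Fin n → Fin n)
    (S : Fin n → Fin n → ZMod 2)
    (r1 r2 r3 c1 c2 c3 : Fin (2 * n))
    (h1 : comb A0 A1 S r1 c2 = comb A0 A1 S r2 c1)
    (h2 : comb A0 A1 S r2 c3 = comb A0 A1 S r3 c2)
    (h3 : comb A0 A1 S r3 c1 = comb A0 A1 S r1 c3)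
    (hblocks : ([(blk r1, blk c2), (blk r2, blk c3), (blk r3, blk c1),
      (blk r2, blk c1), (blk r3, blk c2), (blk r1, blk c3)] :
      List (Fin n × Fin n)).Nodup) :
    (S (blk r1) (blk c2) + S (blk r2) (blk c3) + S (blk r3) (blk c1) +
      S (blk r2) (blk c1) + S (blk r3) (blk c2) + S (blk r1) (blk c3) = 0) ∧
    (∀ S' : Fin n → Fin n → ZMod 2,
      S' (blk r1) (blk c2) + S' (blk r2) (blk c3) + S' (blk r3) (blk c1) +
        S' (blk r2) (blk c1) + S' (blk r3) (blk c2) + S' (blk r1) (blk c3) = 0 →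
      ∃ r1' r2' r3' c1' c2' c3' : Fin (2 * n),
        blk r1' = blk r1 ∧ blk r2' = blk r2 ∧ blk r3' = blk r3 ∧
        blk c1' = blk c1 ∧ blk c2' = blk c2 ∧ blk c3' = blk c3 ∧
        r1' ≠ r2' ∧ r1' ≠ r3' ∧ r2' ≠ r3' ∧ c1' ≠ c2' ∧ c1' ≠ c3' ∧ c2' ≠ c3' ∧
        comb A0 A1 S' r1' c2' = comb A0 A1 S' r2' c1' ∧
        comb A0 A1 S' r2' c3' = comb A0 A1 S' r3' c2' ∧
        comb A0 A1 S' r3' c1' = comb A0 A1 S' r1' c3') := by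
  have hS := sum_eq_sum_of_hexagon (cellParity_eq_of_comb_eq h1) (cellParity_eq_of_comb_eq h2)
    (cellParity_eq_of_comb_eq h3)
  have hrows : blk r1 ≠ blk r2 ∧ blk r1 ≠ blk r3 ∧ blk r2 ≠ blk r3 := by
    refine ⟨?_, ?_, ?_⟩ <;> intro h <;> simp [h] at hblocks
  have hcols : blk c1 ≠ blk c2 ∧ blk c1 ≠ blk c3 ∧ blk c2 ≠ blk c3 := by
    refine ⟨?_, ?_, ?_⟩ <;> intro h <;> simp [h] at hblocks
  refine ⟨(add_six_eq_zero_iff ..).2 hS, fun S' hS' => ?_⟩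
  rw [add_six_eq_zero_iff] at hS'
  obtain ⟨d1, d2, d3, e1, e2, e3, g12, g23, g31, g21, g32, g13⟩ :=
    exists_hexagon_potential (a12 := S (blk r1) (blk c2) - S' (blk r1) (blk c2))
      (a23 := S (blk r2) (blk c3) - S' (blk r2) (blk c3))
      (a31 := S (blk r3) (blk c1) - S' (blk r3) (blk c1))
      (a21 := S (blk r2) (blk c1) - S' (blk r2) (blk c1))
      (a32 := S (blk r3) (blk c2) - S' (blk r3) (blk c2))
      (a13 := S (blk r1) (blk c3) - S' (blk r1) (blk c3)) (by linear_combination hS - hS')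
  refine ⟨shiftInBlock r1 d1, shiftInBlock r2 d2, shiftInBlock r3 d3, shiftInBlock c1 e1,
    shiftInBlock c2 e2, shiftInBlock c3 e3,
    blk_shiftInBlock _ _, blk_shiftInBlock _ _, blk_shiftInBlock _ _,
    blk_shiftInBlock _ _, blk_shiftInBlock _ _, blk_shiftInBlock _ _,
    shiftInBlock_ne hrows.1 _ _, shiftInBlock_ne hrows.2.1 _ _, shiftInBlock_ne hrows.2.2 _ _,
    shiftInBlock_ne hcols.1 _ _, shiftInBlock_ne hcols.2.1 _ _, shiftInBlock_ne hcols.2.2 _ _,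
    ?_, ?_, ?_⟩
  · rw [comb_shiftInBlock A0 A1 g12, comb_shiftInBlock A0 A1 g21, h1]
  · rw [comb_shiftInBlock A0 A1 g23, comb_shiftInBlock A0 A1 g32, h2]
  · rw [comb_shiftInBlock A0 A1 g31, comb_shiftInBlock A0 A1 g13, h3]

/-- If a switched combination of two latin squares contains a `K_{3,3}` pattern located in
six distinct blocks, then the switching matrix has an even number of ones in the six
corresponding positions; moreover, any other switching matrix with an even number of ones
in those six positions gives a combination with a `K_{3,3}` pattern in those six blocks. -/
theorem stmt11 {n : ℕ} (A0 A1 : Fin n → Fin n → Fin n)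
    (hA0 : IsLatin A0) (hA1 : IsLatin A1)
    (S : Fin n → Fin n → ZMod 2)
    (r1 r2 r3 c1 c2 c3 : Fin (2 * n))
    (hr : r1 ≠ r2 ∧ r1 ≠ r3 ∧ r2 ≠ r3) (hc : c1 ≠ c2 ∧ c1 ≠ c3 ∧ c2 ≠ c3)
    (h1 : comb A0 A1 S r1 c2 = comb A0 A1 S r2 c1)
    (h2 : comb A0 A1 S r2 c3 = comb A0 A1 S r3 c2)
    (h3 : comb A0 A1 S r3 c1 = comb A0 A1 S r1 c3)
    (hblocks : ([(blk r1, blk c2), (blk r2, blk c3), (blk r3, blk c1),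
      (blk r2, blk c1), (blk r3, blk c2), (blk r1, blk c3)] :
      List (Fin n × Fin n)).Nodup) :
    (S (blk r1) (blk c2) + S (blk r2) (blk c3) + S (blk r3) (blk c1) +
      S (blk r2) (blk c1) + S (blk r3) (blk c2) + S (blk r1) (blk c3) = 0) ∧
    (∀ S' : Fin n → Fin n → ZMod 2,
      S' (blk r1) (blk c2) + S' (blk r2) (blk c3) + S' (blk r3) (blk c1) +
        S' (blk r2) (blk c1) + S' (blk r3) (blk c2) + S' (blk r1) (blk c3) = 0 →
      ∃ r1' r2' r3' c1' c2' c3' : Fin (2 * n),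
        blk r1' = blk r1 ∧ blk r2' = blk r2 ∧ blk r3' = blk r3 ∧
        blk c1' = blk c1 ∧ blk c2' = blk c2 ∧ blk c3' = blk c3 ∧
        r1' ≠ r2' ∧ r1' ≠ r3' ∧ r2' ≠ r3' ∧ c1' ≠ c2' ∧ c1' ≠ c3' ∧ c2' ≠ c3' ∧
        comb A0 A1 S' r1' c2' = comb A0 A1 S' r2' c1' ∧
        comb A0 A1 S' r2' c3' = comb A0 A1 S' r3' c2' ∧
        comb A0 A1 S' r3' c1' = comb A0 A1 S' r1' c3') :=
  stmt11_general A0 A1 S r1 r2 r3 c1 c2 c3 h1 h2 h3 hblocks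
end
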